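/- Suppose Assumptions TI, CONT, M0, M1 and RA (random assignment) hold, P(G=g, R=r) > 0 for all (g,r) ∈ {0,1}², and μ₁₀(U₀), μ₁₀(U₁), μ₁₁(U₀), μ₁₁(U₁) are all P-integrable. Then the average treatment effect for the study population is identified: E[Y₁(1) − Y₁(0)] = P(R=1|G=1)·E[Y₁ | G=1, R=1] + P(R=0|G=1)·E[F_{Y₁|G=1,R=1}^{-1}(F_{Y₀|G=1,R=1}(Y₀)) | G=1, R=0] − P(R=1|G=0)·E[Y₁ | G=0, R=1] − P(R=0|G=0)·E[F_{Y₁|G=0,R=1}^{-1}(F_{Y₀|G=0,R=1}(Y₀)) | G=0, R=0]. (Proposition 2: identification of the ATE under random assignment.) -/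

import Mathlib

open MeasureTheory ProbabilityTheory

/-- Conditional CDF of `X` given the event `A`: `F_{X|A}(y) = P(X ≤ y | A)`. -/
noncomputable def cCDF {Ω : Type*} [MeasurableSpace Ω] (P : Measure Ω) (A : Set Ω)
    (X : Ω → ℝ) (y : ℝ) : ℝ :=
  ((P[|A]) {ω | X ω ≤ y}).toReal

/-- Generalized inverse `F⁻¹(q) = inf {y ∈ ℝ : F(y) ≥ q}`. -/
noncomputable def ginv (F : ℝ → ℝ) (q : ℝ) : ℝ :=
  sInf {y : ℝ | q ≤ F y}

/-- Conditional expectation of `X` given the event `A`: `E[X·1_A]/P(A)`. -/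
noncomputable def cExp {Ω : Type*} [MeasurableSpace Ω] (P : Measure Ω) (A : Set Ω)
    (X : Ω → ℝ) : ℝ :=
  (∫ ω in A, X ω ∂P) / (P A).toReal

/-- Conditional probability of `B` given `A`: `P(B|A) = P(B ∩ A)/P(A)`. -/
noncomputable def condProb {Ω : Type*} [MeasurableSpace Ω] (P : Measure Ω)
    (A B : Set Ω) : ℝ :=
  (P (B ∩ A)).toReal / (P A).toReal

/-!
Time invariance makes `U₀` and `U₁` equidistributed within every cell `{G = g, R = r}`. On the
respondent cell this gives `F_{Y₀}(Y₀) = F_{U₁}(U₀)`, and because `F_{U₁}` is strictly increasing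
and `μ₁g` is continuous and strictly increasing, the quantile transform `F_{Y₁}⁻¹ ∘ F_{U₁}` sends
`U₀` exactly to `μ₁g(U₀)`. On the non-respondent cell time invariance replaces `μ₁g(U₀)` by
`μ₁g(U₁)`, so the two terms of group `g` add up to `E[μ₁g(U₁) | G = g]`, which is `E[μ₁g(U₁)]`
because `G` is independent of `U₁`.
-/

open Set Filter Topology

lemma ginv_eq_of_forall_le_iff {F : ℝ → ℝ} {q a : ℝ} (h : ∀ y, q ≤ F y ↔ a ≤ y) :
    ginv F q = a := by
  rw [ginv, show {y | q ≤ F y} = Ici a from Set.ext h, csInf_Ici]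

section ConditionalMoments

variable {Ω : Type*} [MeasurableSpace Ω] {P : Measure Ω} {A : Set Ω}

lemma cExp_congr (hA : MeasurableSet A) {X X' : Ω → ℝ} (h : EqOn X X' A) :
    cExp P A X = cExp P A X' := by
  rw [cExp, cExp, setIntegral_congr_fun hA h]

lemma cExp_eq_integral_cond (X : Ω → ℝ) : cExp P A X = ∫ ω, X ω ∂P[|A] := by
  rw [cExp, ProbabilityTheory.cond, integral_smul_measure, ENNReal.toReal_inv, smul_eq_mul,
    div_eq_inv_mul]

lemma cExp_comp_eq_of_map_eq {U V : Ω → ℝ} (hU : Measurable U) (hV : Measurable V)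
    (hUV : (P[|A]).map U = (P[|A]).map V) {f : ℝ → ℝ} (hf : Measurable f) :
    cExp P A (fun ω => f (U ω)) = cExp P A (fun ω => f (V ω)) := by
  rw [cExp_eq_integral_cond, cExp_eq_integral_cond,
    ← integral_map hU.aemeasurable hf.aestronglyMeasurable,
    ← integral_map hV.aemeasurable hf.aestronglyMeasurable, hUV]

lemma condProb_mul_cExp_inter [IsFiniteMeasure P] (B : Set Ω) (X : Ω → ℝ) :
    condProb P A B * cExp P (A ∩ B) X = (∫ ω in A ∩ B, X ω ∂P) / (P A).toReal := by
  rw [condProb, cExp, inter_comm B A]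
  by_cases hAB : P (A ∩ B) = 0
  · simp [Measure.restrict_eq_zero.mpr hAB]
  · have : (P (A ∩ B)).toReal ≠ 0 := ENNReal.toReal_ne_zero.mpr ⟨hAB, measure_ne_top _ _⟩
    field_simp

lemma condProb_mul_cExp_add_compl [IsFiniteMeasure P] {B : Set Ω} (hB : MeasurableSet B)
    {X : Ω → ℝ} (hX : IntegrableOn X A P) :
    condProb P A B * cExp P (A ∩ B) X + condProb P A Bᶜ * cExp P (A ∩ Bᶜ) X = cExp P A X := by
  rw [condProb_mul_cExp_inter, condProb_mul_cExp_inter, ← add_div, ← sdiff_eq,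
    integral_inter_add_sdiff hB hX, cExp]

lemma cExp_preimage_eq_integral_of_indepFun [IsFiniteMeasure P] {β γ : Type*}
    [MeasurableSpace β] [MeasurableSpace γ] {G : Ω → β} {X : Ω → γ}
    (hG : Measurable G) (hX : Measurable X) (hGX : IndepFun G X P)
    {s : Set β} (hs : MeasurableSet s) (hPs : P (G ⁻¹' s) ≠ 0) {f : γ → ℝ} (hf : Measurable f) :
    cExp P (G ⁻¹' s) (fun ω => f (X ω)) = ∫ ω, f (X ω) ∂P := by
  have hPs' : P.real (G ⁻¹' s) ≠ 0 := ENNReal.toReal_ne_zero.mpr ⟨hPs, measure_ne_top _ _⟩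
  rw [cExp, Indep.setIntegral_eq_mul hG.comap_le ((IndepFun_iff_Indep _ _ _).1 hGX)
    hX.aemeasurable ⟨s, hs, rfl⟩ hf.aestronglyMeasurable]
  exact mul_div_cancel_left₀ _ hPs'

lemma cCDF_le_cCDF {X X' : Ω → ℝ} {y y' : ℝ} (h : ∀ ω, X ω ≤ y → X' ω ≤ y') :
    cCDF P A X y ≤ cCDF P A X' y' :=
  ENNReal.toReal_mono (measure_ne_top _ _) (measure_mono h)

lemma cCDF_congr (hA : MeasurableSet A) {X X' : Ω → ℝ} (h : EqOn X X' A) :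
    cCDF P A X = cCDF P A X' := by
  funext y
  rw [cCDF, cCDF, cond_apply hA, cond_apply hA]
  congr 3
  ext ω
  exact and_congr_right fun hω => show X ω ≤ y ↔ X' ω ≤ y by rw [h hω]

lemma cCDF_eq_of_map_eq {U V : Ω → ℝ} (hU : Measurable U) (hV : Measurable V)
    (hUV : (P[|A]).map U = (P[|A]).map V) : cCDF P A U = cCDF P A V := by
  funext y
  have := congrArg (fun μ : Measure ℝ => (μ (Iic y)).toReal) hUV
  rwa [Measure.map_apply hU measurableSet_Iic, Measure.map_apply hV measurableSet_Iic] at this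

lemma cCDF_comp_strictMono {U : Ω → ℝ} {f : ℝ → ℝ} (hf : StrictMono f) (u : ℝ) :
    cCDF P A (fun ω => f (U ω)) (f u) = cCDF P A U u := by
  simp only [cCDF, hf.le_iff_le]

lemma ginv_cCDF_comp {U : Ω → ℝ} {f : ℝ → ℝ} (hfc : Continuous f) (hfm : StrictMono f)
    (hF : StrictMono (cCDF P A U)) (u : ℝ) :
    ginv (cCDF P A (fun ω => f (U ω))) (cCDF P A U u) = f u := by
  refine ginv_eq_of_forall_le_iff fun y => ⟨fun hy => ?_, fun hy => ?_⟩
  · by_contra! hyu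
    -- continuity of `f` leaves room for a `t < u` with `y < f t`
    have hev : ∀ᶠ t in 𝓝[<] u, y < f t :=
      nhdsWithin_le_nhds ((hfc.tendsto u).eventually (lt_mem_nhds hyu))
    obtain ⟨t, hyt, htu⟩ := (hev.and self_mem_nhdsWithin).exists
    have : cCDF P A (fun ω => f (U ω)) y ≤ cCDF P A U t :=
      cCDF_le_cCDF fun ω hω => (hfm.lt_iff_lt.mp (hω.trans_lt hyt)).le
    linarith [hF htu]
  · calc cCDF P A U u = cCDF P A (fun ω => f (U ω)) (f u) := (cCDF_comp_strictMono hfm u).symm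
      _ ≤ cCDF P A (fun ω => f (U ω)) y := cCDF_le_cCDF fun ω hω => hω.trans hy

end ConditionalMoments

section ChangesInChanges

variable {Ω : Type*} [MeasurableSpace Ω] {P : Measure Ω}

lemma ginv_cCDF_cCDF_eq_of_map_eq {A : Set Ω} (hA : MeasurableSet A) {U₀ U₁ Y₀ Y₁ : Ω → ℝ}
    (hU₀ : Measurable U₀) (hU₁ : Measurable U₁) (hlaw : (P[|A]).map U₀ = (P[|A]).map U₁)
    (hF : StrictMono (cCDF P A U₁)) {h f : ℝ → ℝ} (hh : StrictMono h) (hfc : Continuous f)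
    (hfm : StrictMono f) (hY₀ : ∀ ω, Y₀ ω = h (U₀ ω)) (hY₁ : EqOn Y₁ (fun ω => f (U₁ ω)) A)
    (ω : Ω) :
    ginv (cCDF P A Y₁) (cCDF P A Y₀ (Y₀ ω)) = f (U₀ ω) := by
  rw [hY₀ ω, show Y₀ = fun ω => h (U₀ ω) from funext hY₀, cCDF_comp_strictMono hh,
    cCDF_congr hA hY₁, cCDF_eq_of_map_eq hU₀ hU₁ hlaw]
  exact ginv_cCDF_comp hfc hfm hF (U₀ ω)

theorem integral_eq_condProb_mul_cExp_add_counterfactual [IsFiniteMeasure P]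
    {U₀ U₁ Y₀ Y₁ : Ω → ℝ} {G R : Ω → Bool} (hU₀ : Measurable U₀) (hU₁ : Measurable U₁)
    (hG : Measurable G) (hR : Measurable R) (hGU₁ : IndepFun G U₁ P) (g : Bool)
    (hG_pos : P {ω | G ω = g} ≠ 0)
    (hTI : ∀ r, (P[|{ω | G ω = g ∧ R ω = r}]).map U₀ = (P[|{ω | G ω = g ∧ R ω = r}]).map U₁)
    (hF : StrictMono (cCDF P {ω | G ω = g ∧ R ω = true} U₁))
    {h f : ℝ → ℝ} (hh : StrictMono h) (hfc : Continuous f) (hfm : StrictMono f)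
    (hY₀ : ∀ ω, Y₀ ω = h (U₀ ω)) (hY₁ : ∀ ω, G ω = g → Y₁ ω = f (U₁ ω))
    (hf_int : Integrable (fun ω => f (U₁ ω)) P) :
    condProb P {ω | G ω = g} {ω | R ω = true} * cExp P {ω | G ω = g ∧ R ω = true} Y₁
      + condProb P {ω | G ω = g} {ω | R ω = false}
        * cExp P {ω | G ω = g ∧ R ω = false}
            (fun ω => ginv (cCDF P {ω | G ω = g ∧ R ω = true} Y₁)
              (cCDF P {ω | G ω = g ∧ R ω = true} Y₀ (Y₀ ω)))
      = ∫ ω, f (U₁ ω) ∂P := by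
  have hGR (r : Bool) : MeasurableSet {ω | G ω = g ∧ R ω = r} :=
    (hG (measurableSet_singleton g)).inter (hR (measurableSet_singleton r))
  have hobserved : cExp P {ω | G ω = g ∧ R ω = true} Y₁
      = cExp P {ω | G ω = g ∧ R ω = true} (fun ω => f (U₁ ω)) :=
    cExp_congr (hGR true) fun ω hω => hY₁ ω hω.1
  have hcounterfactual : cExp P {ω | G ω = g ∧ R ω = false}
      (fun ω => ginv (cCDF P {ω | G ω = g ∧ R ω = true} Y₁)
        (cCDF P {ω | G ω = g ∧ R ω = true} Y₀ (Y₀ ω)))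
      = cExp P {ω | G ω = g ∧ R ω = false} (fun ω => f (U₁ ω)) := by
    simp only [ginv_cCDF_cCDF_eq_of_map_eq (hGR true) hU₀ hU₁ (hTI true) hF hh hfc hfm hY₀
      fun ω hω => hY₁ ω hω.1]
    exact cExp_comp_eq_of_map_eq hU₀ hU₁ (hTI false) hfc.measurable
  have htotal := condProb_mul_cExp_add_compl (A := {ω | G ω = g}) (B := {ω | R ω = true})
    (hR (measurableSet_singleton true)) hf_int.integrableOn
  rw [show {ω | R ω = true}ᶜ = {ω | R ω = false} by ext; simp] at htotal
  rw [hobserved, hcounterfactual]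
  exact htotal.trans (cExp_preimage_eq_integral_of_indepFun hG hU₁ hGU₁
    (measurableSet_singleton g) hG_pos hfc.measurable)

end ChangesInChanges

theorem cic_prop2_ATE_random_assignment_general {Ω : Type*} [MeasurableSpace Ω]
    (P : Measure Ω) [IsProbabilityMeasure P]
    (U₀ U₁ : Ω → ℝ) (G R R₀ R₁ : Ω → Bool)
    (hU₀ : Measurable U₀) (hU₁ : Measurable U₁)
    (hG : Measurable G) (hR : Measurable R)
    (μ00 μ10 μ11 : ℝ → ℝ)
    -- observed outcomes
    (Y0 Y1 : Ω → ℝ)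
    (hY0 : ∀ ω, Y0 ω = μ00 (U₀ ω))
    (hY1 : ∀ ω, Y1 ω = if G ω = true then μ11 (U₁ ω) else μ10 (U₁ ω))
    -- Assumption RA (random assignment)
    (hRA : IndepFun G (fun ω => (U₀ ω, U₁ ω, R₀ ω, R₁ ω)) P)
    -- Assumption TI (time invariance)
    (hTI : ∀ g r : Bool, 0 < P {ω | G ω = g ∧ R ω = r} →
      (P[|{ω | G ω = g ∧ R ω = r}]).map U₀ = (P[|{ω | G ω = g ∧ R ω = r}]).map U₁)
    -- Assumption CONT
    (hCONT : ∀ g : Bool, 0 < P {ω | G ω = g ∧ R ω = true} ∧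
      Continuous (cCDF P {ω | G ω = g ∧ R ω = true} U₁) ∧
      StrictMono (cCDF P {ω | G ω = g ∧ R ω = true} U₁))
    -- Assumption M0
    (hμ00 : StrictMono μ00)
    (hμ10c : Continuous μ10) (hμ10 : StrictMono μ10)
    -- Assumption M1
    (hμ11c : Continuous μ11) (hμ11 : StrictMono μ11)
    -- all four treatment-response subpopulations have positive probability
    (hpos : ∀ g r : Bool, 0 < P {ω | G ω = g ∧ R ω = r})
    -- integrability
    (hI2 : Integrable (fun ω => μ10 (U₁ ω)) P)
    (hI4 : Integrable (fun ω => μ11 (U₁ ω)) P) :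
    ∫ ω, (μ11 (U₁ ω) - μ10 (U₁ ω)) ∂P
      = condProb P {ω | G ω = true} {ω | R ω = true}
          * cExp P {ω | G ω = true ∧ R ω = true} Y1
        + condProb P {ω | G ω = true} {ω | R ω = false}
          * cExp P {ω | G ω = true ∧ R ω = false}
              (fun ω => ginv (cCDF P {ω | G ω = true ∧ R ω = true} Y1)
                (cCDF P {ω | G ω = true ∧ R ω = true} Y0 (Y0 ω)))
        - condProb P {ω | G ω = false} {ω | R ω = true}
          * cExp P {ω | G ω = false ∧ R ω = true} Y1
        - condProb P {ω | G ω = false} {ω | R ω = false}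
          * cExp P {ω | G ω = false ∧ R ω = false}
              (fun ω => ginv (cCDF P {ω | G ω = false ∧ R ω = true} Y1)
                (cCDF P {ω | G ω = false ∧ R ω = true} Y0 (Y0 ω))) := by
  have hGU₁ : IndepFun G U₁ P := hRA.comp measurable_id (measurable_fst.comp measurable_snd)
  have hG_pos (g : Bool) : P {ω | G ω = g} ≠ 0 :=
    ((hpos g true).trans_le (measure_mono fun _ hω => hω.1)).ne'
  have htreated := integral_eq_condProb_mul_cExp_add_counterfactual (Y₁ := Y1) hU₀ hU₁ hG hR
    hGU₁ true (hG_pos true) (fun r => hTI true r (hpos true r)) (hCONT true).2.2 hμ00 hμ11c hμ11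
    hY0 (fun ω hω => by rw [hY1, if_pos hω]) hI4
  have hcontrol := integral_eq_condProb_mul_cExp_add_counterfactual (Y₁ := Y1) hU₀ hU₁ hG hR
    hGU₁ false (hG_pos false) (fun r => hTI false r (hpos false r)) (hCONT false).2.2 hμ00 hμ10c
    hμ10 hY0 (fun ω hω => by rw [hY1, if_neg (by simp [hω])]) hI2
  rw [integral_sub hI4 hI2, ← htreated, ← hcontrol]
  ring

/-- **Proposition 2 (identification of the ATE under random assignment)**: under
Assumptions TI, CONT, M0, M1 and RA (`G` independent of `(U₀, U₁, R₀, R₁)`), with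
`P(G=g, R=r) > 0` for all `(g,r)` and integrability of `μ₁₀(U₀)`, `μ₁₀(U₁)`, `μ₁₁(U₀)`,
`μ₁₁(U₁)`, the average treatment effect for the study population is identified:
`E[Y₁(1) − Y₁(0)] = P(R=1|G=1)·E[Y₁|G=1,R=1]
  + P(R=0|G=1)·E[F_{Y₁|G=1,R=1}⁻¹(F_{Y₀|G=1,R=1}(Y₀))|G=1,R=0]
  − P(R=1|G=0)·E[Y₁|G=0,R=1]
  − P(R=0|G=0)·E[F_{Y₁|G=0,R=1}⁻¹(F_{Y₀|G=0,R=1}(Y₀))|G=0,R=0]`. -/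
theorem cic_prop2_ATE_random_assignment {Ω : Type*} [MeasurableSpace Ω]
    (P : Measure Ω) [IsProbabilityMeasure P]
    (U₀ U₁ : Ω → ℝ) (G R R₀ R₁ : Ω → Bool)
    (hU₀ : Measurable U₀) (hU₁ : Measurable U₁)
    (hG : Measurable G) (hR : Measurable R)
    (hR₀ : Measurable R₀) (hR₁ : Measurable R₁)
    (μ00 μ10 μ11 : ℝ → ℝ)
    -- observed outcomes
    (Y0 Y1 : Ω → ℝ)
    (hY0 : ∀ ω, Y0 ω = μ00 (U₀ ω))
    (hY1 : ∀ ω, Y1 ω = if G ω = true then μ11 (U₁ ω) else μ10 (U₁ ω))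
    -- observed response: R = R₁ on {G=1} and R = R₀ on {G=0}
    (hRdef : ∀ ω, R ω = if G ω = true then R₁ ω else R₀ ω)
    -- Assumption RA (random assignment)
    (hRA : IndepFun G (fun ω => (U₀ ω, U₁ ω, R₀ ω, R₁ ω)) P)
    -- Assumption TI (time invariance)
    (hTI : ∀ g r : Bool, 0 < P {ω | G ω = g ∧ R ω = r} →
      (P[|{ω | G ω = g ∧ R ω = r}]).map U₀ = (P[|{ω | G ω = g ∧ R ω = r}]).map U₁)
    -- Assumption CONT
    (hCONT : ∀ g : Bool, 0 < P {ω | G ω = g ∧ R ω = true} ∧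
      Continuous (cCDF P {ω | G ω = g ∧ R ω = true} U₁) ∧
      StrictMono (cCDF P {ω | G ω = g ∧ R ω = true} U₁))
    -- Assumption M0
    (hμ00c : Continuous μ00) (hμ00 : StrictMono μ00)
    (hμ10c : Continuous μ10) (hμ10 : StrictMono μ10)
    -- Assumption M1
    (hμ11c : Continuous μ11) (hμ11 : StrictMono μ11)
    -- all four treatment-response subpopulations have positive probability
    (hpos : ∀ g r : Bool, 0 < P {ω | G ω = g ∧ R ω = r})
    -- integrability
    (hI1 : Integrable (fun ω => μ10 (U₀ ω)) P)
    (hI2 : Integrable (fun ω => μ10 (U₁ ω)) P)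
    (hI3 : Integrable (fun ω => μ11 (U₀ ω)) P)
    (hI4 : Integrable (fun ω => μ11 (U₁ ω)) P) :
    ∫ ω, (μ11 (U₁ ω) - μ10 (U₁ ω)) ∂P
      = condProb P {ω | G ω = true} {ω | R ω = true}
          * cExp P {ω | G ω = true ∧ R ω = true} Y1
        + condProb P {ω | G ω = true} {ω | R ω = false}
          * cExp P {ω | G ω = true ∧ R ω = false}
              (fun ω => ginv (cCDF P {ω | G ω = true ∧ R ω = true} Y1)
                (cCDF P {ω | G ω = true ∧ R ω = true} Y0 (Y0 ω)))
        - condProb P {ω | G ω = false} {ω | R ω = true}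
          * cExp P {ω | G ω = false ∧ R ω = true} Y1
        - condProb P {ω | G ω = false} {ω | R ω = false}
          * cExp P {ω | G ω = false ∧ R ω = false}
              (fun ω => ginv (cCDF P {ω | G ω = false ∧ R ω = true} Y1)
                (cCDF P {ω | G ω = false ∧ R ω = true} Y0 (Y0 ω))) :=
  cic_prop2_ATE_random_assignment_general P U₀ U₁ G R R₀ R₁ hU₀ hU₁ hG hR μ00 μ10 μ11 Y0 Y1 hY0 hY1
    hRA hTI hCONT hμ00 hμ10c hμ10 hμ11c hμ11 hpos hI2 hI4
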